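/- arXiv:1710.11065 — 2 statements merged into one kernel-verified Lean document; each statement's English description precedes it below -/
import Mathlib

section
/- Let ν be a σ-finite measure on (0,∞) with ∫₀^∞ min(1,x) ν(dx) < ∞, let c ∈ ℝ, σ > 0, q > 0, define ψ(s) = c s + (σ²/2) s² + ∫₀^∞ (e^{−s x} − 1) ν(dx), and let Φ > 0 satisfy ψ(Φ) = q and 2c + σ²Φ > 0. Set c̃ = c + σ²Φ. Then the product [∫₀^∞ (e^{−Φ y}/(c+Φσ²)) ν((y,∞)) dy] · [∫₀^∞ e^{Φ v} (2c̃/σ²) e^{−(2c̃/σ²) v} dv] equals 1 − 2q / (Φ (2c + σ² Φ)), and this quantity lies strictly between 0 and 1 whenever 2q < Φ(2c + σ²Φ). -/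
open MeasureTheory Set

open Real ENNReal

lemma intexp {a : ℝ} (ha : 0 < a) : ∫ v in Ioi (0:ℝ), Real.exp (-(a * v)) = a⁻¹ := by
  have := integral_comp_mul_left_Ioi (fun y => Real.exp (-y)) 0 ha
  simp only [mul_zero] at this
  rw [show (fun v : ℝ => Real.exp (-(a*v))) = fun v => (fun y => Real.exp (-y)) (a*v) from rfl,
    this, integral_exp_neg_Ioi_zero, smul_eq_mul, mul_one]

lemma intexp2 {Φ x : ℝ} (hΦ : 0 < Φ) (hx : 0 ≤ x) :
    ∫ y in Ioo (0:ℝ) x, Real.exp (-Φ * y) = (1 - Real.exp (-Φ * x)) / Φ := by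
  rw [← integral_Ioc_eq_integral_Ioo, ← intervalIntegral.integral_of_le hx]
  have : ∀ y : ℝ, Real.exp (-Φ * y) = (fun z => Real.exp z) ((-Φ) * y) := fun y => rfl
  rw [intervalIntegral.integral_comp_mul_left (fun z => Real.exp z) (c := -Φ) (by linarith)]
  simp only [mul_zero, integral_exp, smul_eq_mul]
  rw [eq_div_iff (ne_of_gt hΦ), inv_neg]
  ring_nf
  rw [mul_inv_cancel₀ (ne_of_gt hΦ), Real.exp_zero]
  ring_nf

lemma tonelli (ν : Measure ℝ) [SigmaFinite ν] (hν0 : ν (Iic 0) = 0) {Φ : ℝ} (hΦ : 0 < Φ) :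
    ∫⁻ y in Ioi (0:ℝ), ENNReal.ofReal (Real.exp (-Φ * y)) * ν (Ioi y)
      = ∫⁻ x, ENNReal.ofReal ((1 - Real.exp (-Φ * x)) / Φ) ∂ν := by
  have hae : ∀ᵐ x ∂ν, 0 < x := by
    rw [ae_iff]
    convert hν0 using 2
    ext x; simp [not_lt]
  set F : ℝ → ℝ → ℝ≥0∞ := fun y x => ENNReal.ofReal (Real.exp (-Φ * y)) * (Ioi y).indicator (1 : ℝ → ℝ≥0∞) x with hF
  have h1 : ∀ y : ℝ, ENNReal.ofReal (Real.exp (-Φ * y)) * ν (Ioi y) = ∫⁻ x, F y x ∂ν := by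
    intro y
    simp only [hF]
    rw [lintegral_const_mul _ (measurable_one.indicator measurableSet_Ioi),
      lintegral_indicator_one measurableSet_Ioi]
  rw [lintegral_congr h1]
  have hmeas : AEMeasurable (Function.uncurry F) ((volume.restrict (Ioi (0:ℝ))).prod ν) := by
    have : Function.uncurry F = fun p : ℝ × ℝ =>
        ENNReal.ofReal (Real.exp (-Φ * p.1)) * ({q : ℝ × ℝ | q.1 < q.2}).indicator (1 : ℝ × ℝ → ℝ≥0∞) p := by
      funext p
      simp only [Function.uncurry, hF, indicator, mem_Ioi, mem_setOf_eq]
      by_cases h : p.1 < p.2 <;> simp [h]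
    rw [this]
    exact ((ENNReal.measurable_ofReal.comp ((measurable_fst.const_mul (-Φ)).exp)).mul
      (measurable_const.indicator (measurableSet_lt measurable_fst measurable_snd))).aemeasurable
  rw [lintegral_lintegral_swap hmeas]
  refine lintegral_congr_ae (hae.mono fun x hx => ?_)
  have h2 : ∀ y : ℝ, F y x = (Iio x).indicator (fun y => ENNReal.ofReal (Real.exp (-Φ * y))) y := by
    intro y
    simp only [hF, indicator, mem_Ioi, mem_Iio]
    by_cases h : y < x <;> simp [h]
  simp only []
  rw [lintegral_congr h2, lintegral_indicator measurableSet_Iio,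
    Measure.restrict_restrict measurableSet_Iio]
  have : Iio x ∩ Ioi (0:ℝ) = Ioo 0 x := by ext z; simp [mem_Ioo, and_comm]
  rw [this, ← ofReal_integral_eq_lintegral_ofReal, intexp2 hΦ hx.le]
  · exact (Real.continuous_exp.comp (continuous_const.mul continuous_id)).integrableOn_Icc.mono_set Ioo_subset_Icc_self
  · exact Filter.Eventually.of_forall fun y => (Real.exp_pos _).le

/-- The product of the exponential moments of H and G equals 1 − 2q/(Φ(2c + σ²Φ)),
    a quantity that lies strictly in (0,1) whenever 2q < Φ(2c + σ²Φ). -/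
theorem stmt_4 (ν : Measure ℝ) [SigmaFinite ν] (hν0 : ν (Iic 0) = 0)
    (hνint : ∫⁻ x, ENNReal.ofReal (min 1 x) ∂ν < ⊤)
    (c σ q Φ : ℝ) (hσ : 0 < σ) (hq : 0 < q) (hΦ : 0 < Φ)
    (hpos : 0 < 2 * c + σ ^ 2 * Φ)
    (hroot : c * Φ + σ ^ 2 / 2 * Φ ^ 2 + ∫ x, (Real.exp (-Φ * x) - 1) ∂ν = q) :
    (∫ y in Ioi (0 : ℝ), Real.exp (-Φ * y) / (c + Φ * σ ^ 2) * (ν (Ioi y)).toReal) *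
      (∫ v in Ioi (0 : ℝ),
        Real.exp (Φ * v) * ((2 * (c + σ ^ 2 * Φ)) / σ ^ 2)
          * Real.exp (-((2 * (c + σ ^ 2 * Φ)) / σ ^ 2) * v))
      = 1 - 2 * q / (Φ * (2 * c + σ ^ 2 * Φ))
    ∧ (2 * q < Φ * (2 * c + σ ^ 2 * Φ) →
        0 < 1 - 2 * q / (Φ * (2 * c + σ ^ 2 * Φ))
        ∧ 1 - 2 * q / (Φ * (2 * c + σ ^ 2 * Φ)) < 1) := by
  have hσ2 : (0:ℝ) < σ ^ 2 := by positivity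
  have hcb : (0:ℝ) < c + Φ * σ ^ 2 := by nlinarith
  have hae : ∀ᵐ x ∂ν, 0 < x := by
    rw [ae_iff]
    convert hν0 using 2
    ext x; simp [not_lt]
  set g : ℝ → ℝ := fun x => 1 - Real.exp (-Φ * x) with hg
  -- pointwise bound
  have hbd : ∀ x : ℝ, ENNReal.ofReal (g x) ≤ ENNReal.ofReal (max 1 Φ) * ENNReal.ofReal (min 1 x) := by
    intro x
    rcases le_or_gt x 0 with hx | hx
    · have : g x ≤ 0 := by
        have : (1:ℝ) ≤ Real.exp (-Φ * x) := by
          rw [← Real.exp_zero]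
          exact Real.exp_le_exp.mpr (by nlinarith)
        simp only [hg]; linarith
      rw [ENNReal.ofReal_eq_zero.mpr this]
      exact zero_le
    · rw [← ENNReal.ofReal_mul (le_trans zero_le_one (le_max_left 1 Φ))]
      apply ENNReal.ofReal_le_ofReal
      have hexp : 1 - Real.exp (-Φ * x) ≤ Φ * x := by
        have := Real.add_one_le_exp (-Φ * x)
        nlinarith
      rcases le_total x 1 with hx1 | hx1
      · rw [min_eq_right hx1]
        calc g x ≤ Φ * x := hexp
        _ ≤ max 1 Φ * x := by nlinarith [le_max_right 1 Φ]
      · rw [min_eq_left hx1]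
        have : Real.exp (-Φ * x) > 0 := Real.exp_pos _
        calc g x ≤ 1 := by simp only [hg]; linarith
        _ ≤ max 1 Φ * 1 := by nlinarith [le_max_left 1 Φ]
  set J : ℝ≥0∞ := ∫⁻ x, ENNReal.ofReal (g x) ∂ν with hJ
  have hJfin : J < ⊤ := by
    calc J ≤ ∫⁻ x, ENNReal.ofReal (max 1 Φ) * ENNReal.ofReal (min 1 x) ∂ν := lintegral_mono hbd
    _ = ENNReal.ofReal (max 1 Φ) * ∫⁻ x, ENNReal.ofReal (min 1 x) ∂ν :=
        lintegral_const_mul' _ _ ENNReal.ofReal_ne_top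
    _ < ⊤ := ENNReal.mul_lt_top ENNReal.ofReal_lt_top hνint
  have hgnn : 0 ≤ᵐ[ν] g := hae.mono fun x hx => by
    have h1 : Real.exp (-Φ * x) ≤ 1 := by
      rw [← Real.exp_zero]
      exact Real.exp_le_exp.mpr (by nlinarith)
    simp only [hg, Pi.zero_apply]; linarith
  have hgm : AEStronglyMeasurable g ν :=
    (continuous_const.sub (Real.continuous_exp.comp (continuous_const.mul continuous_id))).aestronglyMeasurable
  have hA : ∫ x, g x ∂ν = J.toReal := by
    rw [integral_eq_lintegral_of_nonneg_ae hgnn hgm]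
  set A : ℝ := J.toReal with hAdef
  have hAval : A = c * Φ + σ ^ 2 / 2 * Φ ^ 2 - q := by
    have : ∫ x, (Real.exp (-Φ * x) - 1) ∂ν = -A := by
      rw [← hA, ← integral_neg]
      congr 1
      funext x; simp [hg]
    rw [this] at hroot
    linarith
  -- finiteness of ν (Ioi y) for y > 0
  have hfin : ∀ y : ℝ, 0 < y → ν (Ioi y) < ⊤ := by
    intro y hy
    have key : ENNReal.ofReal (min 1 y) * ν (Ioi y) ≤ ∫⁻ x, ENNReal.ofReal (min 1 x) ∂ν := by
      calc ENNReal.ofReal (min 1 y) * ν (Ioi y) = ∫⁻ _ in Ioi y, ENNReal.ofReal (min 1 y) ∂ν :=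
          (setLIntegral_const _ _).symm
      _ ≤ ∫⁻ x in Ioi y, ENNReal.ofReal (min 1 x) ∂ν := by
          apply setLIntegral_mono ((continuous_const.min continuous_id).measurable.ennreal_ofReal)
          intro x hx
          exact ENNReal.ofReal_le_ofReal (min_le_min le_rfl (le_of_lt hx))
      _ ≤ ∫⁻ x, ENNReal.ofReal (min 1 x) ∂ν := setLIntegral_le_lintegral _ _
    by_contra h
    push_neg at h
    rw [top_le_iff.mp h, ENNReal.mul_top] at key
    · exact hνint.ne (top_le_iff.mp key)
    · simp only [ne_eq, ENNReal.ofReal_eq_zero, not_le]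
      exact lt_min one_pos hy
  -- first factor
  have hmes1 : Measurable fun y : ℝ => Real.exp (-Φ * y) * (ν (Ioi y)).toReal := by
    apply ((measurable_id.const_mul (-Φ)).exp).mul
    exact (Antitone.measurable fun a b hab => measure_mono (Ioi_subset_Ioi hab)).ennreal_toReal
  have hF1 : (∫ y in Ioi (0 : ℝ), Real.exp (-Φ * y) / (c + Φ * σ ^ 2) * (ν (Ioi y)).toReal)
      = (c + Φ * σ ^ 2)⁻¹ * (Φ⁻¹ * A) := by
    have e1 : (fun y : ℝ => Real.exp (-Φ * y) / (c + Φ * σ ^ 2) * (ν (Ioi y)).toReal)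
        = fun y => (c + Φ * σ ^ 2)⁻¹ * (Real.exp (-Φ * y) * (ν (Ioi y)).toReal) := by
      funext y; ring
    rw [e1, integral_const_mul]
    congr 1
    have e2 : ∫ y in Ioi (0:ℝ), Real.exp (-Φ * y) * (ν (Ioi y)).toReal
        = (∫⁻ y in Ioi (0:ℝ), ENNReal.ofReal (Real.exp (-Φ * y) * (ν (Ioi y)).toReal)).toReal := by
      apply integral_eq_lintegral_of_nonneg_ae
      · exact Filter.Eventually.of_forall fun y => mul_nonneg (Real.exp_pos _).le ENNReal.toReal_nonneg
      · exact hmes1.aestronglyMeasurable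
    have e3 : ∫⁻ y in Ioi (0:ℝ), ENNReal.ofReal (Real.exp (-Φ * y) * (ν (Ioi y)).toReal)
        = ∫⁻ y in Ioi (0:ℝ), ENNReal.ofReal (Real.exp (-Φ * y)) * ν (Ioi y) := by
      apply lintegral_congr_ae
      apply (ae_restrict_iff' measurableSet_Ioi).mpr
      refine Filter.Eventually.of_forall fun y hy => ?_
      simp only []
      rw [ENNReal.ofReal_mul (Real.exp_pos _).le, ENNReal.ofReal_toReal (hfin y hy).ne]
    have e4 : ∫⁻ x, ENNReal.ofReal ((1 - Real.exp (-Φ * x)) / Φ) ∂ν = ENNReal.ofReal Φ⁻¹ * J := by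
      rw [hJ]
      rw [← lintegral_const_mul' _ _ ENNReal.ofReal_ne_top]
      apply lintegral_congr fun x => ?_
      rw [← ENNReal.ofReal_mul (by positivity)]
      congr 1
      simp only [hg]
      ring
    rw [e2, e3, tonelli ν hν0 hΦ, e4, ENNReal.toReal_mul, ENNReal.toReal_ofReal (by positivity),
      hAdef]
  -- second factor
  set lam : ℝ := 2 * (c + σ ^ 2 * Φ) / σ ^ 2 with hlam
  have hlamΦ : 0 < lam - Φ := by
    rw [hlam, sub_pos, lt_div_iff₀ hσ2]
    nlinarith
  have hF2 : (∫ v in Ioi (0 : ℝ), Real.exp (Φ * v) * ((2 * (c + σ ^ 2 * Φ)) / σ ^ 2)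
      * Real.exp (-((2 * (c + σ ^ 2 * Φ)) / σ ^ 2) * v)) = lam * (lam - Φ)⁻¹ := by
    have e1 : (fun v : ℝ => Real.exp (Φ * v) * ((2 * (c + σ ^ 2 * Φ)) / σ ^ 2)
        * Real.exp (-((2 * (c + σ ^ 2 * Φ)) / σ ^ 2) * v))
        = fun v => lam * Real.exp (-((lam - Φ) * v)) := by
      funext v
      rw [show Real.exp (Φ * v) * ((2 * (c + σ ^ 2 * Φ)) / σ ^ 2)
            * Real.exp (-((2 * (c + σ ^ 2 * Φ)) / σ ^ 2) * v)
          = (2 * (c + σ ^ 2 * Φ) / σ ^ 2)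
            * (Real.exp (Φ * v) * Real.exp (-((2 * (c + σ ^ 2 * Φ)) / σ ^ 2) * v)) from by ring,
        ← Real.exp_add, hlam]
      congr 1
      ring
    rw [e1, integral_const_mul, intexp hlamΦ]
  rw [hF1, hF2]
  constructor
  · rw [hAval, hlam]
    have h2 : (c + Φ * σ ^ 2) ≠ 0 := ne_of_gt hcb
    have h3 : (2 * c + σ ^ 2 * Φ) ≠ 0 := ne_of_gt hpos
    have h4 : σ ≠ 0 := ne_of_gt hσ
    have h5 : Φ ≠ 0 := ne_of_gt hΦ
    have hsub : 2 * (c + σ ^ 2 * Φ) / σ ^ 2 - Φ = (2 * c + σ ^ 2 * Φ) / σ ^ 2 := by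
      field_simp
      ring
    rw [hsub]
    field_simp
    ring_nf
    have h3' : Φ * σ ^ 2 + c * 2 ≠ 0 := ne_of_gt (by linarith)
    field_simp
    ring
  · intro hlt
    have hd : 0 < Φ * (2 * c + σ ^ 2 * Φ) := by positivity
    constructor
    · have : 2 * q / (Φ * (2 * c + σ ^ 2 * Φ)) < 1 := (div_lt_one hd).mpr hlt
      linarith
    · have : 0 < 2 * q / (Φ * (2 * c + σ ^ 2 * Φ)) := by positivity
      linarith
end

section
/- Let α ∈ (1,2), c > 0, q ≥ 0 and s ∈ ℝ with (s + c)^α > q + c^α. Then ∫₀^∞ e^{−s x} · e^{−c x} x^{α−1} (∑_{k=0}^∞ ((q + c^α) x^α)^k / Γ(α + α k)) dx = 1 / ((s + c)^α − c^α − q). -/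
/-!
Expand `E_{α,β}` in its power series and integrate term by term: the `k`-th term is a Gamma
integral, `∫₀^∞ a^k x^{β+αk-1} e^{-bx} / Γ(β+αk) dx = b^{-β} (a / b^α)^k`, so the transform is a
geometric series with ratio `a / b^α`. The same computation with `|a|` in place of `a` gives a
convergent series of integrals of norms, which justifies exchanging sum and integral.
-/

open MeasureTheory Set Real

noncomputable def mittagLeffler (α β z : ℝ) : ℝ :=
  ∑' k : ℕ, z ^ k / Gamma (β + α * k)

lemma integrableOn_rpow_sub_one_mul_exp_neg_mul {b p : ℝ} (hb : 0 < b) (hp : 0 < p) :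
    IntegrableOn (fun x : ℝ => x ^ (p - 1) * exp (-(b * x))) (Ioi 0) := by
  simpa only [rpow_one, neg_mul] using
    integrableOn_rpow_mul_exp_neg_mul_rpow (s := p - 1) (by linarith) one_pos hb

lemma integral_rpow_sub_one_mul_exp_neg_mul_div_Gamma {b p : ℝ} (hb : 0 < b) (hp : 0 < p) :
    ∫ x in Ioi 0, x ^ (p - 1) * exp (-(b * x)) / Gamma p = (b ^ p)⁻¹ := by
  rw [integral_div, integral_rpow_mul_exp_neg_mul_Ioi hp hb,
    mul_div_cancel_right₀ _ (Gamma_pos_of_pos hp).ne', one_div, inv_rpow hb.le]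

noncomputable def mittagLefflerLaplaceTerm (α β b a : ℝ) (k : ℕ) (x : ℝ) : ℝ :=
  a ^ k * (x ^ (β + α * k - 1) * exp (-(b * x)) / Gamma (β + α * k))

section LaplaceTransform

variable {α β b : ℝ}

lemma exp_neg_mul_mul_rpow_mul_mittagLeffler_eq_tsum (a : ℝ) {x : ℝ} (hx : 0 < x) :
    exp (-(b * x)) * (x ^ (β - 1) * mittagLeffler α β (a * x ^ α))
      = ∑' k, mittagLefflerLaplaceTerm α β b a k x := by
  rw [mittagLeffler, ← tsum_mul_left, ← tsum_mul_left]
  refine tsum_congr fun k => ?_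
  have hpow : x ^ (β - 1) * (a * x ^ α) ^ k = a ^ k * x ^ (β + α * k - 1) := by
    rw [mul_pow, ← rpow_natCast (x ^ α), ← rpow_mul hx.le, mul_left_comm, ← rpow_add hx]
    ring_nf
  rw [mittagLefflerLaplaceTerm, mul_div_assoc', hpow]
  ring

lemma integral_mittagLefflerLaplaceTerm (hα : 0 < α) (hβ : 0 < β) (hb : 0 < b) (a : ℝ)
    (k : ℕ) :
    ∫ x in Ioi 0, mittagLefflerLaplaceTerm α β b a k x = (b ^ β)⁻¹ * (a / b ^ α) ^ k := by
  have hp : 0 < β + α * k := by positivity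
  unfold mittagLefflerLaplaceTerm
  rw [integral_const_mul,
    integral_rpow_sub_one_mul_exp_neg_mul_div_Gamma hb hp, rpow_add hb,
    rpow_mul hb.le, rpow_natCast, div_pow]
  field_simp

lemma integrableOn_mittagLefflerLaplaceTerm (hα : 0 < α) (hβ : 0 < β) (hb : 0 < b) (a : ℝ)
    (k : ℕ) : IntegrableOn (mittagLefflerLaplaceTerm α β b a k) (Ioi 0) :=
  ((integrableOn_rpow_sub_one_mul_exp_neg_mul hb (by positivity)).div_const _).const_mul _

lemma norm_mittagLefflerLaplaceTerm (a : ℝ) (k : ℕ) {x : ℝ} (hx : 0 < x) (hp : 0 < β + α * k) :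
    ‖mittagLefflerLaplaceTerm α β b a k x‖ = mittagLefflerLaplaceTerm α β b |a| k x := by
  have := Gamma_pos_of_pos hp
  rw [mittagLefflerLaplaceTerm, mittagLefflerLaplaceTerm, norm_mul, norm_pow, norm_eq_abs a,
    norm_of_nonneg (by positivity)]

theorem integral_exp_neg_mul_mul_rpow_mul_mittagLeffler (hα : 0 < α) (hβ : 0 < β) (hb : 0 < b)
    {a : ℝ} (ha : |a| < b ^ α) :
    ∫ x in Ioi 0, exp (-(b * x)) * (x ^ (β - 1) * mittagLeffler α β (a * x ^ α))
      = b ^ (α - β) / (b ^ α - a) := by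
  have hbα : 0 < b ^ α := rpow_pos_of_pos hb α
  have ratio_lt_one {a' : ℝ} (h : |a'| < b ^ α) : |a' / b ^ α| < 1 := by
    rwa [abs_div, abs_of_pos hbα, div_lt_one hbα]
  have hsum_norm : Summable fun k => ∫ x in Ioi 0, ‖mittagLefflerLaplaceTerm α β b a k x‖ := by
    have hnorm (k : ℕ) : ∫ x in Ioi 0, ‖mittagLefflerLaplaceTerm α β b a k x‖
        = (b ^ β)⁻¹ * (|a| / b ^ α) ^ k := by
      rw [← integral_mittagLefflerLaplaceTerm hα hβ hb |a| k]
      exact setIntegral_congr_fun measurableSet_Ioi fun x hx =>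
        norm_mittagLefflerLaplaceTerm a k hx (by positivity)
    simp_rw [hnorm]
    exact (summable_geometric_of_abs_lt_one (ratio_lt_one (by rwa [abs_abs]))).mul_left _
  have hseries := hasSum_integral_of_summable_integral_norm
    (integrableOn_mittagLefflerLaplaceTerm hα hβ hb a) hsum_norm
  simp_rw [integral_mittagLefflerLaplaceTerm hα hβ hb a] at hseries
  rw [setIntegral_congr_fun measurableSet_Ioi fun x hx =>
      exp_neg_mul_mul_rpow_mul_mittagLeffler_eq_tsum a hx,
    ← ((hasSum_geometric_of_abs_lt_one (ratio_lt_one ha)).mul_left _).unique hseries,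
    rpow_sub hb]
  have : b ^ α - a ≠ 0 := by linarith [le_abs_self a]
  field_simp

end LaplaceTransform

theorem stmt_19_general (α c q s : ℝ) (hα1 : 1 < α) (hc : 0 < c) (hq : 0 ≤ q)
    (hsc : 0 < s + c) (h : q + c ^ α < (s + c) ^ α) :
    ∫ x in Ioi (0 : ℝ),
        Real.exp (-s * x)
          * (Real.exp (-c * x) * x ^ (α - 1)
              * ∑' k : ℕ, ((q + c ^ α) * x ^ α) ^ k / Real.Gamma (α + α * k))
      = 1 / ((s + c) ^ α - c ^ α - q) := by
  have ha : 0 ≤ q + c ^ α := add_nonneg hq (rpow_pos_of_pos hc α).le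
  have hintegrand : ∀ x : ℝ, exp (-s * x) * (exp (-c * x) * x ^ (α - 1)
        * ∑' k : ℕ, ((q + c ^ α) * x ^ α) ^ k / Gamma (α + α * k))
      = exp (-((s + c) * x)) * (x ^ (α - 1) * mittagLeffler α α ((q + c ^ α) * x ^ α)) := by
    intro x
    rw [mittagLeffler, show -((s + c) * x) = -s * x + -c * x by ring, exp_add]
    ring
  simp_rw [hintegrand]
  rw [integral_exp_neg_mul_mul_rpow_mul_mittagLeffler (by linarith) (by linarith) hsc
    (by rwa [abs_of_nonneg ha]), sub_self, rpow_zero]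
  ring

/-- Laplace transform of the q-scale function W^{(q)}(x) = e^{−cx} x^{α−1}
    E_{α,α}((q+c^α)x^α) of the spectrally negative α-stable risk process with
    Laplace exponent ψ(s) = (s+c)^α − c^α:
    ∫₀^∞ e^{−sx} W^{(q)}(x) dx = 1/((s+c)^α − c^α − q) for (s+c)^α > q + c^α
    (i.e. s > Φ(q) = (q+c^α)^{1/α} − c, so that s + c > 0). -/
theorem stmt_19 (α c q s : ℝ) (hα1 : 1 < α) (hα2 : α < 2) (hc : 0 < c) (hq : 0 ≤ q)
    (hsc : 0 < s + c) (h : q + c ^ α < (s + c) ^ α) :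
    ∫ x in Ioi (0 : ℝ),
        Real.exp (-s * x)
          * (Real.exp (-c * x) * x ^ (α - 1)
              * ∑' k : ℕ, ((q + c ^ α) * x ^ α) ^ k / Real.Gamma (α + α * k))
      = 1 / ((s + c) ^ α - c ^ α - q) :=
  stmt_19_general α c q s hα1 hc hq hsc h
end
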